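/- arXiv:2008.02497 — 2 statements merged into one kernel-verified Lean document; each statement's English description precedes it below -/
import Mathlib

section
/- If a Markov transition kernel T on a measurable space Θ satisfies a uniform (one-step) minorization condition T(θ, A) ≥ ε·λ(A) for all θ ∈ Θ and measurable A, where ε ∈ (0,1] and λ is a probability measure, then T admits a unique invariant probability measure π and for every θ and n ≥ 1, the total variation distance satisfies ‖Tⁿ(θ,·) − π‖_TV ≤ (1 − ε)ⁿ. -/
open MeasureTheory ProbabilityTheory

/-- Total variation distance between two measures: the supremum over measurable
sets of the absolute difference of the masses. -/
noncomputable def tvDist {Θ : Type*} [MeasurableSpace Θ] (μ ν : Measure Θ) : ℝ :=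
  ⨆ A : {A : Set Θ // MeasurableSet A}, |(μ A).toReal - (ν A).toReal|

/-- `nStep T n` is the `n`-step transition kernel obtained by iterating `T`. -/
noncomputable def nStep {Θ : Type*} [MeasurableSpace Θ] (T : Kernel Θ Θ) : ℕ → Kernel Θ Θ
  | 0 => Kernel.id
  | n + 1 => T ∘ₖ nStep T n

/-! The minorization splits `T = m + R` with `m := ε • λ` and `R` a sub-Markov kernel of mass
`1 - ε`: at each step the chain regenerates from `λ` with probability `ε`. Iterating, every initial
law `ν` satisfies `ν Tⁿ = ∑_{k<n} m Rᵏ + ν Rⁿ`; the head does not depend on `ν` and the tail has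
mass `(1 - ε)ⁿ`, so any two laws are within `(1 - ε)ⁿ` of each other after `n` steps. The measure
`π = ∑ₖ m Rᵏ` is an invariant probability; comparing with `ν = π` gives the convergence rate, and
an invariant law `π'` is within `(1 - ε)ⁿ` of `π` for every `n`, hence equal to it. -/

open Set Finset
open scoped ENNReal

lemma ENNReal.abs_toReal_add_sub_toReal_add_le {h x y c : ℝ≥0∞} (hx : h + x ≠ ∞)
    (hxc : x ≤ c) (hyc : y ≤ c) (hc : c ≠ ∞) :
    |(h + x).toReal - (h + y).toReal| ≤ c.toReal := by
  have hh : h ≠ ∞ := ne_top_of_le_ne_top hx le_self_add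
  rw [ENNReal.toReal_add hh (ne_top_of_le_ne_top hc hxc),
    ENNReal.toReal_add hh (ne_top_of_le_ne_top hc hyc), add_sub_add_left_eq_sub, abs_sub_le_iff]
  have := ENNReal.toReal_mono hc hxc
  have := ENNReal.toReal_mono hc hyc
  constructor <;> linarith [ENNReal.toReal_nonneg (a := x), ENNReal.toReal_nonneg (a := y)]

lemma MeasureTheory.Measure.comp_finsetSum {α β ι : Type*} [MeasurableSpace α] [MeasurableSpace β]
    (κ : Kernel α β) (s : Finset ι) (μ : ι → Measure α) :
    κ ∘ₘ (∑ i ∈ s, μ i) = ∑ i ∈ s, κ ∘ₘ μ i := by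
  classical
  induction s using Finset.induction_on with
  | empty => simp
  | insert i s hi ih => rw [sum_insert hi, sum_insert hi, Measure.comp_add, ih]

namespace ProbabilityTheory.Kernel

variable {α β : Type*} [MeasurableSpace α] [MeasurableSpace β]

noncomputable def residual (κ : Kernel α β) (m : Measure β) [IsFiniteMeasure m]
    (hm : ∀ a, m ≤ κ a) : Kernel α β where
  toFun a := κ a - m
  measurable' := by
    refine Measure.measurable_of_measurable_coe _ fun s hs => ?_
    simp_rw [Measure.sub_apply hs (hm _)]
    exact (κ.measurable_coe hs).sub measurable_const

variable {κ : Kernel α β} {m : Measure β} [IsFiniteMeasure m] (hm : ∀ a, m ≤ κ a)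

lemma residual_apply (a : α) : residual κ m hm a = κ a - m := rfl

lemma const_add_residual : const α m + residual κ m hm = κ := by
  ext1 a
  rw [FunLike.coe_add, Pi.add_apply, const_apply, residual_apply, add_comm,
    Measure.sub_add_cancel_of_le (hm a)]

lemma comp_eq_smul_add_residual_comp (μ : Measure α) :
    κ ∘ₘ μ = μ univ • m + residual κ m hm ∘ₘ μ := by
  conv_lhs => rw [← const_add_residual hm]
  rw [Measure.add_comp, Measure.const_comp]

lemma residual_apply_univ [IsMarkovKernel κ] (a : α) :
    residual κ m hm a univ = 1 - m univ := by
  rw [residual_apply, Measure.sub_apply .univ (hm a), measure_univ]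

lemma residual_comp_apply_univ [IsMarkovKernel κ] (μ : Measure α) :
    (residual κ m hm ∘ₘ μ) univ = (1 - m univ) * μ univ := by
  rw [Measure.bind_apply .univ (Kernel.aemeasurable _)]
  simp_rw [residual_apply_univ hm]
  rw [MeasureTheory.lintegral_const, mul_comm]

end ProbabilityTheory.Kernel

section nStep

variable {Θ : Type*} [MeasurableSpace Θ] {T : Kernel Θ Θ}

instance isMarkovKernel_nStep [IsMarkovKernel T] : ∀ n, IsMarkovKernel (nStep T n)
  | 0 => inferInstanceAs (IsMarkovKernel Kernel.id)
  | n + 1 => haveI := isMarkovKernel_nStep n; inferInstanceAs (IsMarkovKernel (T ∘ₖ nStep T n))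

lemma nStep_zero_comp (μ : Measure Θ) : nStep T 0 ∘ₘ μ = μ := Measure.id_comp

lemma nStep_succ_comp (n : ℕ) (μ : Measure Θ) : nStep T (n + 1) ∘ₘ μ = T ∘ₘ (nStep T n ∘ₘ μ) :=
  Measure.comp_assoc.symm

lemma nStep_apply_eq_comp_dirac (n : ℕ) (θ : Θ) : nStep T n θ = nStep T n ∘ₘ Measure.dirac θ :=
  (Measure.dirac_bind (Kernel.measurable _) θ).symm

lemma nStep_comp_of_comp_eq {μ : Measure Θ} (hμ : T ∘ₘ μ = μ) (n : ℕ) : nStep T n ∘ₘ μ = μ := by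
  induction n with
  | zero => exact nStep_zero_comp μ
  | succ n ih => rw [nStep_succ_comp, ih, hμ]

end nStep

lemma measure_univ_le_one_of_le_kernel {Θ : Type*} [MeasurableSpace Θ] {T : Kernel Θ Θ}
    [IsMarkovKernel T] {m : Measure Θ} (hm : ∀ θ, m ≤ T θ) (hm0 : m univ ≠ 0) : m univ ≤ 1 := by
  obtain ⟨θ⟩ := nonempty_of_measure_ne_zero hm0
  simpa using hm θ univ

noncomputable def regenerationMeasure {Θ : Type*} [MeasurableSpace Θ] (T : Kernel Θ Θ)
    (m : Measure Θ) [IsFiniteMeasure m] (hm : ∀ θ, m ≤ T θ) : Measure Θ :=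
  Measure.sum fun k => nStep (T.residual m hm) k ∘ₘ m

section Minorization

variable {Θ : Type*} [MeasurableSpace Θ] {T : Kernel Θ Θ} [IsMarkovKernel T]
  {m : Measure Θ} [IsFiniteMeasure m]

lemma nStep_residual_comp_apply_univ (hm : ∀ θ, m ≤ T θ) (n : ℕ) (μ : Measure Θ) :
    (nStep (T.residual m hm) n ∘ₘ μ) univ = (1 - m univ) ^ n * μ univ := by
  induction n with
  | zero => rw [nStep_zero_comp, pow_zero, one_mul]
  | succ n ih => rw [nStep_succ_comp, Kernel.residual_comp_apply_univ, ih, pow_succ', mul_assoc]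

theorem nStep_comp_eq_sum_add (hm : ∀ θ, m ≤ T θ) (ν : Measure Θ) [IsProbabilityMeasure ν]
    (n : ℕ) :
    nStep T n ∘ₘ ν = ∑ k ∈ range n, nStep (T.residual m hm) k ∘ₘ m
      + nStep (T.residual m hm) n ∘ₘ ν := by
  induction n with
  | zero => simp [nStep_zero_comp]
  | succ n ih =>
    rw [nStep_succ_comp, Kernel.comp_eq_smul_add_residual_comp hm, measure_univ, one_smul, ih,
      Measure.comp_add, Measure.comp_finsetSum, sum_range_succ', nStep_zero_comp]
    simp only [nStep_succ_comp]
    abel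

theorem abs_toReal_nStep_comp_sub_le (hm : ∀ θ, m ≤ T θ) (ν ν' : Measure Θ)
    [IsProbabilityMeasure ν] [IsProbabilityMeasure ν'] (n : ℕ) (s : Set Θ) :
    |((nStep T n ∘ₘ ν) s).toReal - ((nStep T n ∘ₘ ν') s).toReal|
      ≤ ((1 - m univ) ^ n).toReal := by
  have tail_le (μ : Measure Θ) [IsProbabilityMeasure μ] :
      (nStep (T.residual m hm) n ∘ₘ μ) s ≤ (1 - m univ) ^ n := by
    simpa [nStep_residual_comp_apply_univ hm] using
      measure_mono (μ := nStep (T.residual m hm) n ∘ₘ μ) (subset_univ s)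
  have hfin := measure_ne_top (nStep T n ∘ₘ ν) s
  rw [nStep_comp_eq_sum_add hm, Measure.add_apply] at hfin ⊢
  rw [nStep_comp_eq_sum_add hm, Measure.add_apply]
  exact ENNReal.abs_toReal_add_sub_toReal_add_le hfin (tail_le ν) (tail_le ν') (by finiteness)

lemma regenerationMeasure_univ (hm : ∀ θ, m ≤ T θ) (hm0 : m univ ≠ 0) :
    regenerationMeasure T m hm univ = 1 := by
  rw [regenerationMeasure, Measure.sum_apply _ .univ]
  simp_rw [nStep_residual_comp_apply_univ hm]
  rw [ENNReal.tsum_mul_right, ENNReal.tsum_geometric,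
    ENNReal.sub_sub_cancel ENNReal.one_ne_top (measure_univ_le_one_of_le_kernel hm hm0),
    ENNReal.inv_mul_cancel hm0 (measure_ne_top _ _)]

lemma isProbabilityMeasure_regenerationMeasure (hm : ∀ θ, m ≤ T θ) (hm0 : m univ ≠ 0) :
    IsProbabilityMeasure (regenerationMeasure T m hm) :=
  ⟨regenerationMeasure_univ hm hm0⟩

theorem comp_regenerationMeasure (hm : ∀ θ, m ≤ T θ) (hm0 : m univ ≠ 0) :
    T ∘ₘ regenerationMeasure T m hm = regenerationMeasure T m hm := by
  rw [Kernel.comp_eq_smul_add_residual_comp hm, regenerationMeasure_univ hm hm0, one_smul,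
    regenerationMeasure, Measure.bind_sum _ _ (Kernel.aemeasurable _)]
  ext s hs
  rw [Measure.add_apply, Measure.sum_apply _ hs, Measure.sum_apply _ hs,
    tsum_eq_zero_add' (f := fun k => (nStep (T.residual m hm) k ∘ₘ m) s) ENNReal.summable]
  simp only [nStep_zero_comp, nStep_succ_comp]

theorem eq_regenerationMeasure_of_comp_eq (hm : ∀ θ, m ≤ T θ) (hm0 : m univ ≠ 0) (μ : Measure Θ)
    [IsProbabilityMeasure μ] (hμ : T ∘ₘ μ = μ) : μ = regenerationMeasure T m hm := by
  have := isProbabilityMeasure_regenerationMeasure hm hm0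
  have hrate : (1 - m univ).toReal < 1 := by
    rw [← ENNReal.toReal_one]
    exact (ENNReal.toReal_lt_toReal (by finiteness) ENNReal.one_ne_top).mpr
      (ENNReal.sub_lt_self ENNReal.one_ne_top one_ne_zero hm0)
  ext s -
  have hle (n : ℕ) :
      |(μ s).toReal - (regenerationMeasure T m hm s).toReal| ≤ (1 - m univ).toReal ^ n := by
    simpa only [nStep_comp_of_comp_eq hμ, nStep_comp_of_comp_eq (comp_regenerationMeasure hm hm0),
      ENNReal.toReal_pow] using abs_toReal_nStep_comp_sub_le hm μ (regenerationMeasure T m hm) n s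
  have := ge_of_tendsto' (tendsto_pow_atTop_nhds_zero_of_lt_one ENNReal.toReal_nonneg hrate) hle
  rwa [abs_nonpos_iff, sub_eq_zero,
    ENNReal.toReal_eq_toReal_iff' (by finiteness) (by finiteness)] at this

theorem tvDist_nStep_regenerationMeasure_le (hm : ∀ θ, m ≤ T θ) (hm0 : m univ ≠ 0) (n : ℕ)
    (θ : Θ) :
    tvDist (nStep T n θ) (regenerationMeasure T m hm) ≤ ((1 - m univ) ^ n).toReal := by
  have := isProbabilityMeasure_regenerationMeasure hm hm0
  refine Real.iSup_le (fun s => ?_) ENNReal.toReal_nonneg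
  have := abs_toReal_nStep_comp_sub_le hm (Measure.dirac θ) (regenerationMeasure T m hm) n s
  rwa [← nStep_apply_eq_comp_dirac, nStep_comp_of_comp_eq (comp_regenerationMeasure hm hm0)] at this

end Minorization

/-- If a Markov kernel `T` satisfies the uniform minorization `T θ A ≥ ε·λ A`
with `ε ∈ (0,1]` and `λ` a probability measure, then `T` admits a unique invariant
probability measure `π` and `‖Tⁿ(θ,·) − π‖_TV ≤ (1 − ε)ⁿ` for all `θ` and `n ≥ 1`. -/
theorem stmt0 {Θ : Type*} [MeasurableSpace Θ] (T : Kernel Θ Θ) [IsMarkovKernel T]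
    (lam : Measure Θ) [IsProbabilityMeasure lam] (ε : ℝ) (hε : 0 < ε) (hε1 : ε ≤ 1)
    (hmin : ∀ θ : Θ, ∀ A : Set Θ, MeasurableSet A → ENNReal.ofReal ε * lam A ≤ T θ A) :
    ∃ π : Measure Θ, IsProbabilityMeasure π ∧ π.bind (fun θ => T θ) = π ∧
      (∀ π' : Measure Θ, IsProbabilityMeasure π' → π'.bind (fun θ => T θ) = π' → π' = π) ∧
      ∀ θ : Θ, ∀ n : ℕ, 1 ≤ n → tvDist (nStep T n θ) π ≤ (1 - ε) ^ n := by
  set m := ENNReal.ofReal ε • lam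
  have : IsFiniteMeasure m := ⟨by simp [m]⟩
  have hm (θ : Θ) : m ≤ T θ := Measure.le_iff.mpr fun A hA => by simpa [m] using hmin θ A hA
  have hm_univ : m univ = ENNReal.ofReal ε := by simp [m]
  have hm0 : m univ ≠ 0 := by simpa [hm_univ] using hε
  have hrate (n : ℕ) : ((1 - m univ) ^ n).toReal = (1 - ε) ^ n := by
    rw [hm_univ, ENNReal.toReal_pow, ENNReal.toReal_sub_of_le (ENNReal.ofReal_le_one.2 hε1)
      ENNReal.one_ne_top, ENNReal.toReal_one, ENNReal.toReal_ofReal hε.le]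
  have := isProbabilityMeasure_regenerationMeasure hm hm0
  refine ⟨regenerationMeasure T m hm, inferInstance, comp_regenerationMeasure hm hm0,
    fun π' _ hπ' => eq_regenerationMeasure_of_comp_eq hm hm0 π' hπ', fun θ n _ => ?_⟩
  rw [← hrate]
  exact tvDist_nStep_regenerationMeasure_le hm hm0 n θ
end

section
/- Let T and T_I be two Metropolis–Hastings-type kernels that share the same proposal kernel q(θ,·) and the same acceptance function α(θ,θ*, S_y) ∈ [0,1], but where the auxiliary variable S_y is drawn from distributions h(·|θ*) in T and g(·|θ*) in T_I respectively. If ‖h(·|θ*) − g(·|θ*)‖_TV ≤ δ for all θ*, then for every θ, ‖T(θ,·) − T_I(θ,·)‖_TV ≤ 2δ. -/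
open MeasureTheory ProbabilityTheory

/-- The Metropolis–Hastings-type kernel (as a set function) with proposal `q`,
auxiliary-variable distribution `h(·|θ*)` and acceptance function `α(θ,θ*,s)`:
`T(θ,A) = ∫∫ α(θ,θ*,s) 1_A(θ*) + (1−α(θ,θ*,s)) 1_A(θ) dh(s|θ*) dq(θ*|θ)`. -/
noncomputable def mhAux {Θ X : Type*} [MeasurableSpace Θ] [MeasurableSpace X]
    (q : Kernel Θ Θ) (h : Kernel Θ X) (α : Θ → Θ → X → ℝ) (θ : Θ) (A : Set Θ) : ℝ :=
  ∫ θs, ∫ s, (α θ θs s * A.indicator (fun _ => (1:ℝ)) θs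
      + (1 - α θ θs s) * A.indicator (fun _ => (1:ℝ)) θ) ∂(h θs) ∂(q θ)

/-!
Integrating out the auxiliary variable turns `T(θ, A)` into an ordinary Metropolis–Hastings
kernel whose acceptance probability `a_h(θ, θ*) = ∫ α(θ, θ*, s) h(ds|θ*)` enters affinely:
the integrand is `a_h 1_A(θ*) + (1 - a_h) 1_A(θ)`. Hence `T(θ, A) - T_I(θ, A)` is the
`q(θ, ·)`-integral of `(a_h - a_g)(1_A(θ*) - 1_A(θ))`. The second factor lies in `[-1, 1]`, and
since `α` takes values in `[0, 1]` the layer-cake formula writes `a_h - a_g` as an average of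
differences `h(B|θ*) - g(B|θ*)` over superlevel sets `B` of `α`, so `|a_h - a_g| ≤ δ`.
-/

open Set

section TotalVariation

variable {X : Type*} [MeasurableSpace X]

lemma tvDist_nonneg (μ ν : Measure X) : 0 ≤ tvDist μ ν :=
  Real.iSup_nonneg fun _ => abs_nonneg _

lemma abs_measureReal_sub_le_tvDist (μ ν : Measure X) [IsFiniteMeasure μ] [IsFiniteMeasure ν]
    {A : Set X} (hA : MeasurableSet A) : |μ.real A - ν.real A| ≤ tvDist μ ν := by
  refine le_ciSup (f := fun B : {B : Set X // MeasurableSet B} => |μ.real B - ν.real B|)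
    ⟨μ.real univ + ν.real univ, ?_⟩ ⟨A, hA⟩
  rintro _ ⟨B, rfl⟩
  have hμ : μ.real B ≤ μ.real univ := measureReal_mono (subset_univ _)
  have hν : ν.real B ≤ ν.real univ := measureReal_mono (subset_univ _)
  exact abs_sub_le_iff.2 ⟨by linarith [measureReal_nonneg (μ := ν) (s := B)],
    by linarith [measureReal_nonneg (μ := μ) (s := B)]⟩

lemma abs_integral_sub_le_tvDist (μ ν : Measure X) [IsFiniteMeasure μ] [IsFiniteMeasure ν]
    {f : X → ℝ} (hf : Measurable f) (hf01 : ∀ x, f x ∈ Icc (0 : ℝ) 1) :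
    |∫ x, f x ∂μ - ∫ x, f x ∂ν| ≤ tvDist μ ν := by
  have layer_cake (ρ : Measure X) [IsFiniteMeasure ρ] :
      ∫ x, f x ∂ρ = ∫ t in Ioc (0 : ℝ) 1, ρ.real {x | t ≤ f x} :=
    (Integrable.of_mem_Icc 0 1 hf.aemeasurable (ae_of_all _ hf01)).integral_eq_integral_Ioc_meas_le
      (ae_of_all _ fun x => (hf01 x).1) (ae_of_all _ fun x => (hf01 x).2)
  have integrable_level (ρ : Measure X) [IsFiniteMeasure ρ] :
      Integrable (fun t => ρ.real {x | t ≤ f x}) (volume.restrict (Ioc (0 : ℝ) 1)) := by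
    have hanti : Antitone fun t => ρ.real {x | t ≤ f x} :=
      fun s t hst => measureReal_mono fun x hx => hst.trans hx
    exact Integrable.of_mem_Icc 0 (ρ.real univ) hanti.measurable.aemeasurable
      (ae_of_all _ fun t => ⟨measureReal_nonneg, measureReal_mono (subset_univ _)⟩)
  rw [layer_cake μ, layer_cake ν, ← integral_sub (integrable_level μ) (integrable_level ν),
    ← Real.norm_eq_abs]
  calc _ ≤ tvDist μ ν * (volume.restrict (Ioc (0 : ℝ) 1)).real univ :=
        norm_integral_le_of_norm_le_const (ae_of_all _ fun t =>
          abs_measureReal_sub_le_tvDist μ ν (hf measurableSet_Ici))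
    _ = tvDist μ ν := by simp

end TotalVariation

lemma integral_mul_add_one_sub_mul {X : Type*} [MeasurableSpace X] (ρ : Measure X)
    [IsProbabilityMeasure ρ] {a : X → ℝ} (ha : Integrable a ρ) (x y : ℝ) :
    ∫ s, (a s * x + (1 - a s) * y) ∂ρ = (∫ s, a s ∂ρ) * x + (1 - ∫ s, a s ∂ρ) * y := by
  have affine : (fun s => a s * x + (1 - a s) * y) = fun s => a s * (x - y) + y := by
    funext s; ring
  rw [affine, integral_add (ha.mul_const _) (integrable_const _), integral_mul_const,
    integral_const, probReal_univ, one_smul]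
  ring

lemma abs_integral_sub_integral_convexComb_le {Θ : Type*} [MeasurableSpace Θ] {μ : Measure Θ}
    [IsFiniteMeasure μ] {a b x : Θ → ℝ} {y C : ℝ} (ha : Measurable a) (hb : Measurable b)
    (hx : Measurable x) (ha01 : ∀ θ, a θ ∈ Icc (0 : ℝ) 1) (hb01 : ∀ θ, b θ ∈ Icc (0 : ℝ) 1)
    (hx01 : ∀ θ, x θ ∈ Icc (0 : ℝ) 1) (hy01 : y ∈ Icc (0 : ℝ) 1)
    (hab : ∀ θ, |a θ - b θ| ≤ C) :
    |∫ θ, (a θ * x θ + (1 - a θ) * y) ∂μ - ∫ θ, (b θ * x θ + (1 - b θ) * y) ∂μ|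
      ≤ C * μ.real univ := by
  have integrable (c : Θ → ℝ) (hc : Measurable c) (hc01 : ∀ θ, c θ ∈ Icc (0 : ℝ) 1) :
      Integrable (fun θ => c θ * x θ + (1 - c θ) * y) μ :=
    Integrable.of_mem_Icc 0 1 (by fun_prop) (ae_of_all _ fun θ =>
      convex_Icc (0 : ℝ) 1 (hx01 θ) hy01 (hc01 θ).1 (sub_nonneg.2 (hc01 θ).2) (add_sub_cancel _ _))
  rw [← integral_sub (integrable a ha ha01) (integrable b hb hb01), ← Real.norm_eq_abs]
  refine norm_integral_le_of_norm_le_const (ae_of_all _ fun θ => ?_)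
  have hxy : |x θ - y| ≤ 1 :=
    abs_sub_le_iff.2 ⟨by linarith [(hx01 θ).2, hy01.1], by linarith [(hx01 θ).1, hy01.2]⟩
  calc ‖a θ * x θ + (1 - a θ) * y - (b θ * x θ + (1 - b θ) * y)‖
      = |a θ - b θ| * |x θ - y| := by rw [Real.norm_eq_abs, ← abs_mul]; ring_nf
    _ ≤ C * 1 := mul_le_mul (hab θ) hxy (abs_nonneg _) ((abs_nonneg _).trans (hab θ))
    _ = C := mul_one C

section AcceptanceProbability

variable {Θ X : Type*} [MeasurableSpace Θ] [MeasurableSpace X] {α : Θ → Θ → X → ℝ}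

noncomputable def acceptProb (h : Kernel Θ X) (α : Θ → Θ → X → ℝ) (θ θs : Θ) : ℝ :=
  ∫ s, α θ θs s ∂(h θs)

lemma measurable_acceptProb (h : Kernel Θ X) [IsSFiniteKernel h]
    (hαmeas : Measurable fun p : Θ × Θ × X => α p.1 p.2.1 p.2.2) (θ : Θ) :
    Measurable (acceptProb h α θ) :=
  (StronglyMeasurable.integral_kernel_prod_right' (κ := h)
    (hαmeas.comp (measurable_const.prodMk measurable_id)).stronglyMeasurable).measurable

lemma acceptProb_mem_Icc (h : Kernel Θ X) [IsMarkovKernel h]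
    (hα01 : ∀ θ θs s, α θ θs s ∈ Icc (0 : ℝ) 1) (θ θs : Θ) :
    acceptProb h α θ θs ∈ Icc (0 : ℝ) 1 := by
  refine ⟨integral_nonneg fun s => (hα01 θ θs s).1, ?_⟩
  calc acceptProb h α θ θs ≤ ∫ _, (1 : ℝ) ∂(h θs) :=
        integral_mono_of_nonneg (ae_of_all _ fun s => (hα01 θ θs s).1) (integrable_const _)
          (ae_of_all _ fun s => (hα01 θ θs s).2)
    _ = 1 := by simp

lemma mhAux_eq_integral_acceptProb (q : Kernel Θ Θ) (h : Kernel Θ X) [IsMarkovKernel h]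
    (hαmeas : Measurable fun p : Θ × Θ × X => α p.1 p.2.1 p.2.2)
    (hα01 : ∀ θ θs s, α θ θs s ∈ Icc (0 : ℝ) 1) (θ : Θ) (A : Set Θ) :
    mhAux q h α θ A = ∫ θs, (acceptProb h α θ θs * A.indicator (fun _ => (1 : ℝ)) θs
      + (1 - acceptProb h α θ θs) * A.indicator (fun _ => (1 : ℝ)) θ) ∂(q θ) := by
  refine integral_congr_ae (ae_of_all _ fun θs => integral_mul_add_one_sub_mul _ ?_ _ _)
  exact Integrable.of_mem_Icc 0 1
    (hαmeas.comp (measurable_const.prodMk (measurable_const.prodMk measurable_id))).aemeasurable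
    (ae_of_all _ (hα01 θ θs))

end AcceptanceProbability

theorem stmt2_general {Θ X : Type*} [MeasurableSpace Θ] [MeasurableSpace X]
    (q : Kernel Θ Θ) [IsMarkovKernel q]
    (h g : Kernel Θ X) [IsMarkovKernel h] [IsMarkovKernel g]
    (α : Θ → Θ → X → ℝ)
    (hαmeas : Measurable fun p : Θ × Θ × X => α p.1 p.2.1 p.2.2)
    (hα01 : ∀ θ θs s, α θ θs s ∈ Set.Icc (0 : ℝ) 1)
    (δ : ℝ)
    (hTV : ∀ θs : Θ, tvDist (h θs) (g θs) ≤ δ) :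
    ∀ θ : Θ, ∀ A : Set Θ, MeasurableSet A →
      |mhAux q h α θ A - mhAux q g α θ A| ≤ 2 * δ := by
  intro θ A hA
  have hind (θ' : Θ) : A.indicator (fun _ => (1 : ℝ)) θ' ∈ Icc (0 : ℝ) 1 := by
    by_cases hθ' : θ' ∈ A <;> simp [hθ']
  have acceptProb_close (θs : Θ) : |acceptProb h α θ θs - acceptProb g α θ θs| ≤ δ :=
    (abs_integral_sub_le_tvDist (h θs) (g θs)
      (hαmeas.comp (measurable_const.prodMk (measurable_const.prodMk measurable_id)))
      (hα01 θ θs)).trans (hTV θs)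
  rw [mhAux_eq_integral_acceptProb q h hαmeas hα01, mhAux_eq_integral_acceptProb q g hαmeas hα01]
  calc _ ≤ δ * (q θ).real univ :=
        abs_integral_sub_integral_convexComb_le (measurable_acceptProb h hαmeas θ)
          (measurable_acceptProb g hαmeas θ) (measurable_const.indicator hA)
          (acceptProb_mem_Icc h hα01 θ) (acceptProb_mem_Icc g hα01 θ) hind (hind θ)
          acceptProb_close
    _ ≤ 2 * δ := by
        rw [probReal_univ, mul_one]
        linarith [tvDist_nonneg (h θ) (g θ), hTV θ]

/-- If two Metropolis–Hastings-type kernels share the proposal `q` and acceptance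
function `α`, but draw the auxiliary variable from `h(·|θ*)` resp. `g(·|θ*)` with
`‖h(·|θ*) − g(·|θ*)‖_TV ≤ δ` for all `θ*`, then `‖T(θ,·) − T_I(θ,·)‖_TV ≤ 2δ`. -/
theorem stmt2 {Θ X : Type*} [MeasurableSpace Θ] [MeasurableSpace X]
    (q : Kernel Θ Θ) [IsMarkovKernel q]
    (h g : Kernel Θ X) [IsMarkovKernel h] [IsMarkovKernel g]
    (α : Θ → Θ → X → ℝ)
    (hαmeas : Measurable fun p : Θ × Θ × X => α p.1 p.2.1 p.2.2)
    (hα01 : ∀ θ θs s, α θ θs s ∈ Set.Icc (0 : ℝ) 1)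
    (δ : ℝ) (hδ : 0 ≤ δ)
    (hTV : ∀ θs : Θ, tvDist (h θs) (g θs) ≤ δ) :
    ∀ θ : Θ, ∀ A : Set Θ, MeasurableSet A →
      |mhAux q h α θ A - mhAux q g α θ A| ≤ 2 * δ :=
  stmt2_general q h g α hαmeas hα01 δ hTV
end
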